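/- Let M, a be reals with 0 < a < M, and let α, β, c₁, c₂ be real constants. Let R, Φ : (r₊, ∞) → ℝ be differentiable functions with R′(r) = (r²+a²)/Δ and Φ′(r) = a/Δ, and define on U: f₁ = α exp( c₁(t − R(r)) − (a c₁ + c₂/a)(φ − Φ(r)) ), f₂ = β exp( −c₁(t + R(r)) + (a c₁ + c₂/a)(φ + Φ(r)) ), and F₉ = f₁ ( −(a/Δ) dt ∧ dr + dt ∧ dφ − ((r²+a²)/Δ) dr ∧ dφ ) + f₂ ( (a/Δ) dt ∧ dr + dt ∧ dφ + ((r²+a²)/Δ) dr ∧ dφ ). Then on U, the invariant F₉² := g^{μα}g^{νβ}F₉_{αβ}F₉_{μν} equals −8 f₁ f₂ / (Δ sin²θ). -/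

import Mathlib

noncomputable section

/-- Partial derivative of `f` in the coordinate direction `μ`,
coordinates `(x 0, x 1, x 2, x 3) = (t, r, θ, φ)`. -/
def pd (μ : Fin 4) (f : (Fin 4 → ℝ) → ℝ) (x : Fin 4 → ℝ) : ℝ :=
  fderiv ℝ f x (Pi.single μ 1)

/-- ρ² = r² + a² cos²θ. -/
def rho2 (a : ℝ) (x : Fin 4 → ℝ) : ℝ := (x 1) ^ 2 + a ^ 2 * Real.cos (x 2) ^ 2

/-- Δ = r² − 2Mr + a². -/
def Del (M a : ℝ) (x : Fin 4 → ℝ) : ℝ := (x 1) ^ 2 - 2 * M * (x 1) + a ^ 2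

/-- Σ² = (r²+a²)² − Δ a² sin²θ. -/
def Sig2 (M a : ℝ) (x : Fin 4 → ℝ) : ℝ :=
  ((x 1) ^ 2 + a ^ 2) ^ 2 - Del M a x * a ^ 2 * Real.sin (x 2) ^ 2

/-- The Kerr metric in Boyer–Lindquist coordinates `(t, r, θ, φ)`. -/
def kerr (M a : ℝ) (x : Fin 4 → ℝ) : Matrix (Fin 4) (Fin 4) ℝ :=
  Matrix.of fun μ ν =>
    if μ = 0 ∧ ν = 0 then -1 + 2 * M * (x 1) / rho2 a x
    else if (μ = 0 ∧ ν = 3) ∨ (μ = 3 ∧ ν = 0) then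
      -(2 * M * (x 1) * a * Real.sin (x 2) ^ 2) / rho2 a x
    else if μ = 1 ∧ ν = 1 then rho2 a x / Del M a x
    else if μ = 2 ∧ ν = 2 then rho2 a x
    else if μ = 3 ∧ ν = 3 then Sig2 M a x * Real.sin (x 2) ^ 2 / rho2 a x
    else 0

/-- The exterior Kerr domain U = {r > r₊, 0 < θ < π}. -/
def KerrExt (M a : ℝ) : Set (Fin 4 → ℝ) :=
  {x | M + Real.sqrt (M ^ 2 - a ^ 2) < x 1 ∧ 0 < x 2 ∧ x 2 < Real.pi}

/-- `wedge μ ν f` is the antisymmetric matrix of the 2-form `f dx^μ ∧ dx^ν`. -/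
def wedge (μ ν : Fin 4) (f : ℝ) : Matrix (Fin 4) (Fin 4) ℝ :=
  Matrix.of fun i j => if i = μ ∧ j = ν then f else if i = ν ∧ j = μ then -f else 0

/-- The invariant F² = g^{μα} g^{νβ} F_{αβ} F_{μν}. -/
def Fsq (M a : ℝ) (F : (Fin 4 → ℝ) → Matrix (Fin 4) (Fin 4) ℝ) (x : Fin 4 → ℝ) : ℝ :=
  ∑ μ : Fin 4, ∑ ν : Fin 4, ∑ i : Fin 4, ∑ j : Fin 4,
    (kerr M a x)⁻¹ μ i * (kerr M a x)⁻¹ ν j * F x i j * F x μ ν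

/-- f₁ = α exp( c₁(t − R(r)) − (a c₁ + c₂/a)(φ − Φ(r)) ). -/
def f1K (a α c₁ c₂ : ℝ) (R Φ : ℝ → ℝ) (x : Fin 4 → ℝ) : ℝ :=
  α * Real.exp (c₁ * (x 0 - R (x 1)) - (a * c₁ + c₂ / a) * (x 3 - Φ (x 1)))

/-- f₂ = β exp( −c₁(t + R(r)) + (a c₁ + c₂/a)(φ + Φ(r)) ). -/
def f2K (a β c₁ c₂ : ℝ) (R Φ : ℝ → ℝ) (x : Fin 4 → ℝ) : ℝ :=
  β * Real.exp (-c₁ * (x 0 + R (x 1)) + (a * c₁ + c₂ / a) * (x 3 + Φ (x 1)))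

/-- F₉ = f₁(−(a/Δ) dt∧dr + dt∧dφ − ((r²+a²)/Δ) dr∧dφ)
       + f₂((a/Δ) dt∧dr + dt∧dφ + ((r²+a²)/Δ) dr∧dφ). -/
def F9 (M a α β c₁ c₂ : ℝ) (R Φ : ℝ → ℝ) (x : Fin 4 → ℝ) : Matrix (Fin 4) (Fin 4) ℝ :=
  f1K a α c₁ c₂ R Φ x •
      (wedge 0 1 (-(a / Del M a x)) + wedge 0 3 1
        + wedge 1 3 (-(((x 1) ^ 2 + a ^ 2) / Del M a x)))
    + f2K a β c₁ c₂ R Φ x •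
      (wedge 0 1 (a / Del M a x) + wedge 0 3 1
        + wedge 1 3 (((x 1) ^ 2 + a ^ 2) / Del M a x))

/-!
Write `F₉ = f₁ ω₊ + f₂ ω₋` with `ω± = dt ∧ dφ ± Δ⁻¹ dr ∧ (a dt − (r² + a²) dφ)`. Since `g⁻¹` only
couples `t` with `φ`, the square of `u dt ∧ dφ + dr ∧ (v dt + w dφ)` is `2 (d u² + g^{rr} Q(v, w))`,
where `d` and `Q` are the determinant and the quadratic form of the `(t, φ)` block of `g⁻¹`. For
Kerr, `d = −1/(Δ sin²θ)` and `g^{rr} Q(a, −(r² + a²)) = Δ / sin²θ`, so `ω±` are null and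
`⟨ω₊, ω₋⟩ = −4/(Δ sin²θ)`; hence `F₉² = 2 f₁ f₂ ⟨ω₊, ω₋⟩ = −8 f₁ f₂ / (Δ sin²θ)`.
-/

def tφBlock (g₀₀ g₀₃ g₁₁ g₂₂ g₃₃ : ℝ) : Matrix (Fin 4) (Fin 4) ℝ :=
  !![g₀₀, 0, 0, g₀₃; 0, g₁₁, 0, 0; 0, 0, g₂₂, 0; g₀₃, 0, 0, g₃₃]

def trφForm (F₀₁ F₀₃ F₁₃ : ℝ) : Matrix (Fin 4) (Fin 4) ℝ :=
  !![0, F₀₁, 0, F₀₃; -F₀₁, 0, 0, F₁₃; 0, 0, 0, 0; -F₀₃, -F₁₃, 0, 0]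

def formSq (G F : Matrix (Fin 4) (Fin 4) ℝ) : ℝ :=
  ∑ μ : Fin 4, ∑ ν : Fin 4, ∑ i : Fin 4, ∑ j : Fin 4, G μ i * G ν j * F i j * F μ ν

theorem Fsq_eq_formSq (M a : ℝ) (F : (Fin 4 → ℝ) → Matrix (Fin 4) (Fin 4) ℝ) (x : Fin 4 → ℝ) :
    Fsq M a F x = formSq (kerr M a x)⁻¹ (F x) :=
  rfl

theorem tφBlock_mul_tφBlock_eq_one {g₀₀ g₀₃ g₁₁ g₂₂ g₃₃ h₀₀ h₀₃ h₁₁ h₂₂ h₃₃ : ℝ}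
    (e₀₀ : g₀₀ * h₀₀ + g₀₃ * h₀₃ = 1) (e₀₃ : g₀₀ * h₀₃ + g₀₃ * h₃₃ = 0)
    (e₃₀ : g₀₃ * h₀₀ + g₃₃ * h₀₃ = 0) (e₃₃ : g₀₃ * h₀₃ + g₃₃ * h₃₃ = 1)
    (e₁₁ : g₁₁ * h₁₁ = 1) (e₂₂ : g₂₂ * h₂₂ = 1) :
    tφBlock g₀₀ g₀₃ g₁₁ g₂₂ g₃₃ * tφBlock h₀₀ h₀₃ h₁₁ h₂₂ h₃₃ = 1 := by
  ext i j
  fin_cases i <;> fin_cases j <;> simp [tφBlock, Matrix.mul_apply, Fin.sum_univ_four, *]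

theorem formSq_tφBlock_trφForm (g₀₀ g₀₃ g₁₁ g₂₂ g₃₃ F₀₁ F₀₃ F₁₃ : ℝ) :
    formSq (tφBlock g₀₀ g₀₃ g₁₁ g₂₂ g₃₃) (trφForm F₀₁ F₀₃ F₁₃) =
      2 * (g₁₁ * (g₀₀ * F₀₁ ^ 2 - 2 * g₀₃ * F₀₁ * F₁₃ + g₃₃ * F₁₃ ^ 2)
        + (g₀₀ * g₃₃ - g₀₃ ^ 2) * F₀₃ ^ 2) := by
  simp [formSq, tφBlock, trφForm, Fin.sum_univ_four]
  ring

section Kerr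

variable {M a : ℝ} {x : Fin 4 → ℝ}

theorem Del_pos (hr : M + √(M ^ 2 - a ^ 2) < x 1) : 0 < Del M a x := by
  have hsq : M ^ 2 - a ^ 2 ≤ √(M ^ 2 - a ^ 2) ^ 2 := by
    rw [Real.sq_sqrt']; exact le_max_left _ _
  have hlt : √(M ^ 2 - a ^ 2) ^ 2 < (x 1 - M) ^ 2 := by
    gcongr
    linarith
  unfold Del
  nlinarith

theorem rho2_pos (hr : 0 < x 1) : 0 < rho2 a x := by
  unfold rho2
  positivity

theorem rho2_eq_sub_sin_sq : rho2 a x = x 1 ^ 2 + a ^ 2 - a ^ 2 * Real.sin (x 2) ^ 2 := by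
  rw [rho2, Real.sin_sq]
  ring

theorem two_mul_mul_eq_sub_Del (M a : ℝ) (x : Fin 4 → ℝ) :
    2 * M * x 1 = x 1 ^ 2 + a ^ 2 - Del M a x := by
  rw [Del]
  ring

theorem kerr_eq_tφBlock (M a : ℝ) (x : Fin 4 → ℝ) :
    kerr M a x = tφBlock (-1 + 2 * M * x 1 / rho2 a x)
      (-(2 * M * x 1 * a * Real.sin (x 2) ^ 2) / rho2 a x) (rho2 a x / Del M a x) (rho2 a x)
      (Sig2 M a x * Real.sin (x 2) ^ 2 / rho2 a x) := by
  ext i j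
  fin_cases i <;> fin_cases j <;> simp [kerr, tφBlock]

def kerrInvTT (M a : ℝ) (x : Fin 4 → ℝ) : ℝ := -Sig2 M a x / (rho2 a x * Del M a x)

def kerrInvTΦ (M a : ℝ) (x : Fin 4 → ℝ) : ℝ := -(2 * M * x 1 * a) / (rho2 a x * Del M a x)

def kerrInvΦΦ (M a : ℝ) (x : Fin 4 → ℝ) : ℝ :=
  (Del M a x - a ^ 2 * Real.sin (x 2) ^ 2) / (rho2 a x * Del M a x * Real.sin (x 2) ^ 2)

def kerrInv (M a : ℝ) (x : Fin 4 → ℝ) : Matrix (Fin 4) (Fin 4) ℝ :=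
  tφBlock (kerrInvTT M a x) (kerrInvTΦ M a x) (Del M a x / rho2 a x) (1 / rho2 a x)
    (kerrInvΦΦ M a x)

theorem inv_kerr (hΔ : Del M a x ≠ 0) (hρ : rho2 a x ≠ 0) (hs : Real.sin (x 2) ≠ 0) :
    (kerr M a x)⁻¹ = kerrInv M a x := by
  refine Matrix.inv_eq_right_inv ?_
  have hs2 : Real.sin (x 2) ^ 2 ≠ 0 := pow_ne_zero 2 hs
  rw [kerr_eq_tφBlock, kerrInv, kerrInvTT, kerrInvTΦ, kerrInvΦΦ, Sig2, two_mul_mul_eq_sub_Del M a x]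
  rw [rho2_eq_sub_sin_sq] at hρ ⊢
  generalize x 1 ^ 2 + a ^ 2 = A, Del M a x = D, Real.sin (x 2) ^ 2 = s at *
  apply tφBlock_mul_tφBlock_eq_one <;> field_simp <;> ring

theorem kerrInvTT_mul_kerrInvΦΦ_sub_sq (hΔ : Del M a x ≠ 0) (hρ : rho2 a x ≠ 0)
    (hs : Real.sin (x 2) ≠ 0) :
    kerrInvTT M a x * kerrInvΦΦ M a x - kerrInvTΦ M a x ^ 2
      = -1 / (Del M a x * Real.sin (x 2) ^ 2) := by
  have hs2 : Real.sin (x 2) ^ 2 ≠ 0 := pow_ne_zero 2 hs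
  rw [kerrInvTT, kerrInvTΦ, kerrInvΦΦ, Sig2, two_mul_mul_eq_sub_Del M a x]
  rw [rho2_eq_sub_sin_sq] at hρ ⊢
  generalize x 1 ^ 2 + a ^ 2 = A, Del M a x = D, Real.sin (x 2) ^ 2 = s at *
  field_simp
  ring

theorem Del_div_rho2_mul_kerrInv_quadratic (hΔ : Del M a x ≠ 0) (hρ : rho2 a x ≠ 0)
    (hs : Real.sin (x 2) ≠ 0) :
    Del M a x / rho2 a x * (kerrInvTT M a x * a ^ 2 - 2 * kerrInvTΦ M a x * a * (x 1 ^ 2 + a ^ 2)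
      + kerrInvΦΦ M a x * (x 1 ^ 2 + a ^ 2) ^ 2) = Del M a x / Real.sin (x 2) ^ 2 := by
  have hs2 : Real.sin (x 2) ^ 2 ≠ 0 := pow_ne_zero 2 hs
  rw [kerrInvTT, kerrInvTΦ, kerrInvΦΦ, Sig2, two_mul_mul_eq_sub_Del M a x]
  rw [rho2_eq_sub_sin_sq] at hρ ⊢
  generalize x 1 ^ 2 + a ^ 2 = A, Del M a x = D, Real.sin (x 2) ^ 2 = s at *
  field_simp
  ring

theorem formSq_kerrInv_trφForm (hΔ : Del M a x ≠ 0) (hρ : rho2 a x ≠ 0)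
    (hs : Real.sin (x 2) ≠ 0) (p q : ℝ) :
    formSq (kerrInv M a x)
        (trφForm ((q - p) * (a / Del M a x)) (p + q) ((q - p) * ((x 1 ^ 2 + a ^ 2) / Del M a x)))
      = -8 * p * q / (Del M a x * Real.sin (x 2) ^ 2) := by
  have hnull := Del_div_rho2_mul_kerrInv_quadratic hΔ hρ hs
  have hdet := kerrInvTT_mul_kerrInvΦΦ_sub_sq hΔ hρ hs
  calc _ = 2 * ((q - p) ^ 2 / Del M a x ^ 2 * (Del M a x / rho2 a x * (kerrInvTT M a x * a ^ 2
          - 2 * kerrInvTΦ M a x * a * (x 1 ^ 2 + a ^ 2) + kerrInvΦΦ M a x * (x 1 ^ 2 + a ^ 2) ^ 2))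
        + (kerrInvTT M a x * kerrInvΦΦ M a x - kerrInvTΦ M a x ^ 2) * (p + q) ^ 2) := by
        rw [kerrInv, formSq_tφBlock_trφForm]
        field_simp
    _ = 2 * ((q - p) ^ 2 - (p + q) ^ 2) / (Del M a x * Real.sin (x 2) ^ 2) := by
        rw [hnull, hdet]
        field_simp
        ring
    _ = _ := by ring

end Kerr

theorem F9_eq_trφForm (M a α β c₁ c₂ : ℝ) (R Φ : ℝ → ℝ) (x : Fin 4 → ℝ) :
    F9 M a α β c₁ c₂ R Φ x =
      trφForm ((f2K a β c₁ c₂ R Φ x - f1K a α c₁ c₂ R Φ x) * (a / Del M a x))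
        (f1K a α c₁ c₂ R Φ x + f2K a β c₁ c₂ R Φ x)
        ((f2K a β c₁ c₂ R Φ x - f1K a α c₁ c₂ R Φ x) * ((x 1 ^ 2 + a ^ 2) / Del M a x)) := by
  ext i j
  fin_cases i <;> fin_cases j <;> simp [F9, wedge, trφForm] <;> ring

theorem kerr_F9_invariant_general (M a α β c₁ c₂ : ℝ) (ha : 0 < a) (haM : a < M)
    (R Φ : ℝ → ℝ) :
    ∀ x ∈ KerrExt M a,
      Fsq M a (F9 M a α β c₁ c₂ R Φ) x
        = -8 * f1K a α c₁ c₂ R Φ x * f2K a β c₁ c₂ R Φ x /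
            (Del M a x * Real.sin (x 2) ^ 2) := by
  rintro x ⟨hr, hθ₀, hθπ⟩
  have hr₀ : 0 < x 1 := by linarith [Real.sqrt_nonneg (M ^ 2 - a ^ 2)]
  have hΔ : Del M a x ≠ 0 := (Del_pos hr).ne'
  have hρ : rho2 a x ≠ 0 := (rho2_pos hr₀).ne'
  have hs : Real.sin (x 2) ≠ 0 := (Real.sin_pos_of_pos_of_lt_pi hθ₀ hθπ).ne'
  rw [Fsq_eq_formSq, inv_kerr hΔ hρ hs, F9_eq_trφForm, formSq_kerrInv_trφForm hΔ hρ hs]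

/-- F₉² = −8 f₁ f₂ / (Δ sin²θ) on U. -/
theorem kerr_F9_invariant (M a α β c₁ c₂ : ℝ) (ha : 0 < a) (haM : a < M)
    (R Φ : ℝ → ℝ)
    (hR : ∀ r : ℝ, M + Real.sqrt (M ^ 2 - a ^ 2) < r →
      HasDerivAt R ((r ^ 2 + a ^ 2) / (r ^ 2 - 2 * M * r + a ^ 2)) r)
    (hΦ : ∀ r : ℝ, M + Real.sqrt (M ^ 2 - a ^ 2) < r →
      HasDerivAt Φ (a / (r ^ 2 - 2 * M * r + a ^ 2)) r) :
    ∀ x ∈ KerrExt M a,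
      Fsq M a (F9 M a α β c₁ c₂ R Φ) x
        = -8 * f1K a α c₁ c₂ R Φ x * f2K a β c₁ c₂ R Φ x /
            (Del M a x * Real.sin (x 2) ^ 2) :=
  kerr_F9_invariant_general M a α β c₁ c₂ ha haM R Φ
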